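/- arXiv:1801.06704 — 2 statements merged into one kernel-verified Lean document; each statement's English description precedes it below -/
import Mathlib

section
/- Let a, b ≥ 2 be multiplicatively independent integers (a^m ≠ b^n for all positive integers m, n). Then for every real ε > 0 there exist positive integers m, n with 0 < |a^m − b^n| ≤ ε · b^n. -/
/-!
Dirichlet's theorem gives positive integers `m, n` with `m log a - n log b` as small as we like,
so `a ^ m / b ^ n = exp (m log a - n log b)` is as close to `1` as we like; multiplicative
independence makes the difference `a ^ m - b ^ n` nonzero.
-/

open Real

lemma exists_pos_nat_abs_mul_sub_le {θ δ : ℝ} (hθ : 0 < θ) (hδ : 0 < δ) :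
    ∃ k j : ℕ, 0 < k ∧ 0 < j ∧ |k * θ - j| ≤ δ := by
  set δ' := min δ (θ / 2)
  have hδ' : 0 < δ' := lt_min hδ (half_pos hθ)
  obtain ⟨N, hN⟩ := exists_nat_gt (1 / δ')
  obtain ⟨j, k, hk, -, hkj⟩ := Real.exists_int_int_abs_mul_sub_le θ (Nat.succ_pos N)
  have hkj' : |k * θ - j| ≤ δ' := by
    refine hkj.trans ((one_div_le (by positivity) hδ').2 ?_)
    push_cast
    linarith
  -- `j ≤ 0` would force `k θ - j ≥ θ > δ'`
  have hj : 0 < j := by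
    by_contra! hj
    have : (1 : ℝ) ≤ k := mod_cast hk
    have : (j : ℝ) ≤ 0 := mod_cast hj
    have := le_abs_self (k * θ - j)
    nlinarith [min_le_right δ (θ / 2)]
  lift k to ℕ using hk.le
  lift j to ℕ using hj.le
  exact ⟨k, j, mod_cast hk, mod_cast hj, mod_cast hkj'.trans (min_le_left _ _)⟩

lemma exists_pos_nat_abs_mul_log_sub_mul_log_le {x y η : ℝ} (hx : 1 < x) (hy : 1 < y)
    (hη : 0 < η) : ∃ m n : ℕ, 0 < m ∧ 0 < n ∧ |m * log x - n * log y| ≤ η := by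
  have hlx := log_pos hx
  have hly := log_pos hy
  obtain ⟨m, n, hm, hn, h⟩ :=
    exists_pos_nat_abs_mul_sub_le (div_pos hlx hly) (div_pos hη hly)
  refine ⟨m, n, hm, hn, ?_⟩
  have : m * log x - n * log y = (m * (log x / log y) - n) * log y := by field_simp
  rw [this, abs_mul, abs_of_pos hly, ← le_div_iff₀ hly]
  exact h

lemma abs_sub_le_two_mul_abs_log_sub_log_mul {u v : ℝ} (hu : 0 < u) (hv : 0 < v)
    (h : |log u - log v| ≤ 1) : |u - v| ≤ 2 * |log u - log v| * v := by
  have : u - v = v * (exp (log u - log v) - 1) := by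
    rw [exp_sub, exp_log hu, exp_log hv]
    field_simp
  rw [this, abs_mul, abs_of_pos hv, mul_comm v]
  gcongr
  exact abs_exp_sub_one_le h

theorem base_approximation_nonzero (a b : ℕ) (ha : 2 ≤ a) (hb : 2 ≤ b)
    (hindep : ∀ m n : ℕ, 0 < m → 0 < n → a ^ m ≠ b ^ n)
    (ε : ℝ) (hε : 0 < ε) :
    ∃ m n : ℕ, 0 < m ∧ 0 < n ∧ 0 < |(a : ℝ) ^ m - (b : ℝ) ^ n| ∧
      |(a : ℝ) ^ m - (b : ℝ) ^ n| ≤ ε * (b : ℝ) ^ n := by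
  have ha1 : (1 : ℝ) < a := by exact_mod_cast ha
  have hb1 : (1 : ℝ) < b := by exact_mod_cast hb
  obtain ⟨m, n, hm, hn, hlog⟩ := exists_pos_nat_abs_mul_log_sub_mul_log_le ha1 hb1
    (lt_min one_pos (half_pos hε) : 0 < min 1 (ε / 2))
  rw [← log_pow, ← log_pow] at hlog
  refine ⟨m, n, hm, hn, abs_pos.2 (sub_ne_zero.2 (mod_cast hindep m n hm hn)), ?_⟩
  calc |(a : ℝ) ^ m - (b : ℝ) ^ n|
      ≤ 2 * |log ((a : ℝ) ^ m) - log ((b : ℝ) ^ n)| * (b : ℝ) ^ n :=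
        abs_sub_le_two_mul_abs_log_sub_log_mul (by positivity) (by positivity)
          (hlog.trans (min_le_left _ _))
    _ ≤ ε * (b : ℝ) ^ n := by
        gcongr
        linarith [min_le_right 1 (ε / 2)]
end

section
/- Let b ≥ 2 and let D be any finite set of natural numbers containing {0, 1, ..., b−1}. A sequence f : ℕ → α is b-automatic (with digit alphabet {0,...,b−1}) if and only if there is a DFAO over alphabet D such that f(⟦w⟧_b) = F(δ(s₀, w)) for all words w ∈ D^*. -/
/-!
Normalising a `D`-word into base `b` needs a carry that is bounded by `max D`. Reading most
significant digit first, an automaton can therefore track the states that a canonical base-`b`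
automaton reaches on the window of `K = max D + 1` consecutive numbers `v, v + 1, …, v + K - 1`,
where `v` is the value read so far: appending a digit `d` sends `v + i` to
`v * b + d + i = (v + ⌊(d + i) / b⌋) * b + (d + i) % b` with `⌊(d + i) / b⌋ < K`, so the new window is one more
canonical step applied to entries of the old one. For the state of a number to be well defined,
the canonical automaton first waits in an extra state `none` while it reads leading zeros.
-/

/-- Base-`b` value of a word, most significant digit first. -/
def wordVal (b : ℕ) (w : List ℕ) : ℕ := w.foldl (fun acc d => acc * b + d) 0

lemma wordVal_append_singleton (b : ℕ) (w : List ℕ) (d : ℕ) :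
    wordVal b (w ++ [d]) = wordVal b w * b + d := by
  simp [wordVal, List.foldl_append]

lemma wordVal_cons_zero (b : ℕ) (w : List ℕ) : wordVal b (0 :: w) = wordVal b w := by
  simp [wordVal]

lemma wordVal_reverse (b : ℕ) (l : List ℕ) : wordVal b l.reverse = Nat.ofDigits b l := by
  induction l with
  | nil => rfl
  | cons d l ih =>
    rw [List.reverse_cons, wordVal_append_singleton, ih, Nat.ofDigits_cons]
    ring

lemma wordVal_reverse_digits (b n : ℕ) : wordVal b (b.digits n).reverse = n := by
  rw [wordVal_reverse, Nat.ofDigits_digits]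

lemma foldl_reverse_digits_mul_add {T : Type*} (τ : T → ℕ → T) {t₀ : T} (h₀ : τ t₀ 0 = t₀)
    {b : ℕ} (hb : 1 < b) (u : ℕ) {r : ℕ} (hr : r < b) :
    (b.digits (u * b + r)).reverse.foldl τ t₀ = τ ((b.digits u).reverse.foldl τ t₀) r := by
  by_cases h : r = 0 ∧ u = 0
  · obtain ⟨rfl, rfl⟩ := h
    simpa using h₀.symm
  · rw [mul_comm, add_comm, Nat.digits_add b hb r u hr (not_and_or.mp h)]
    simp

section LeadingZeros

variable {S : Type*} (δ : S → ℕ → S) (s₀ : S)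

def skipLeadingZeros : Option S → ℕ → Option S
  | none, d => if d = 0 then none else some (δ s₀ d)
  | some s, d => some (δ s d)

lemma foldl_skipLeadingZeros_some (w : List ℕ) (s : S) :
    w.foldl (skipLeadingZeros δ s₀) (some s) = some (w.foldl δ s) := by
  induction w generalizing s with
  | nil => rfl
  | cons d w ih => exact ih (δ s d)

lemma apply_wordVal_eq_elim_foldl_skipLeadingZeros {α : Type*} {b : ℕ} {f : ℕ → α} {F : S → α}
    (h : ∀ w : List ℕ, (∀ d ∈ w, d < b) → f (wordVal b w) = F (w.foldl δ s₀))
    (w : List ℕ) (hw : ∀ d ∈ w, d < b) :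
    f (wordVal b w) = (w.foldl (skipLeadingZeros δ s₀) none).elim (f 0) F := by
  induction w with
  | nil => rfl
  | cons d w ih =>
    by_cases hd : d = 0
    · subst hd
      simpa [wordVal_cons_zero, skipLeadingZeros] using ih fun e he => hw e (.tail _ he)
    · simp [h (d :: w) hw, skipLeadingZeros, hd, foldl_skipLeadingZeros_some]

end LeadingZeros

section Carry

variable {T : Type*} {b K : ℕ}

def window (σ : ℕ → T) (v : ℕ) : Fin K → T := fun i => σ (v + i)

/-- The `% K` only keeps the index in range; it is the identity on the digits `d < K` that matter. -/
def carryStep (b : ℕ) (τ : T → ℕ → T) (t : Fin K → T) (d : ℕ) : Fin K → T :=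
  fun i => τ (t ⟨(d + i) / b % K, Nat.mod_lt _ i.pos⟩) ((d + i) % b)

variable {σ : ℕ → T} {τ : T → ℕ → T}

lemma carryStep_window (hb : 2 ≤ b) (hσ : ∀ u r, r < b → σ (u * b + r) = τ (σ u) r)
    (v : ℕ) {d : ℕ} (hd : d < K) :
    carryStep b τ (window σ v : Fin K → T) d = window σ (v * b + d) := by
  funext i
  have hcarry : (d + i) / b < K := by
    have := Nat.mul_le_mul_right K hb
    exact Nat.div_lt_of_lt_mul (by omega)
  have hsplit : v * b + d + i = (v + (d + i) / b) * b + (d + i) % b := by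
    have := Nat.div_add_mod' (d + i) b
    rw [add_mul]
    omega
  simp only [carryStep, window]
  rw [Nat.mod_eq_of_lt hcarry, hsplit, hσ _ _ (Nat.mod_lt _ (by omega))]

lemma foldl_carryStep_window (hb : 2 ≤ b) (hσ : ∀ u r, r < b → σ (u * b + r) = τ (σ u) r)
    (w : List ℕ) (hw : ∀ d ∈ w, d < K) :
    w.foldl (carryStep b τ) (window σ 0 : Fin K → T) = window σ (wordVal b w) := by
  induction w using List.reverseRecOn with
  | nil => rfl
  | append_singleton w d ih =>
    rw [List.foldl_append, List.foldl_cons, List.foldl_nil, ih fun e he => hw e (by simp [he]),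
      carryStep_window hb hσ _ (hw d (by simp)), wordVal_append_singleton]

end Carry

theorem automatic_iff_digit_set_automatic {α : Type*} (b : ℕ) (hb : 2 ≤ b)
    (D : Finset ℕ) (hD : ∀ d, d < b → d ∈ D) (f : ℕ → α) :
    (∃ (S : Type) (_ : Fintype S) (δ : S → ℕ → S) (s₀ : S) (F : S → α),
      ∀ w : List ℕ, (∀ d ∈ w, d < b) → f (wordVal b w) = F (w.foldl δ s₀)) ↔
    (∃ (S : Type) (_ : Fintype S) (δ : S → ℕ → S) (s₀ : S) (F : S → α),
      ∀ w : List ℕ, (∀ d ∈ w, d ∈ D) → f (wordVal b w) = F (w.foldl δ s₀)) := by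
  constructor
  · rintro ⟨S, _, δ, s₀, F, h⟩
    let σ : ℕ → Option S := fun n => (b.digits n).reverse.foldl (skipLeadingZeros δ s₀) none
    have hσ : ∀ u r, r < b → σ (u * b + r) = skipLeadingZeros δ s₀ (σ u) r :=
      fun u _ hr => foldl_reverse_digits_mul_add _ rfl hb u hr
    have hfσ : ∀ n, f n = (σ n).elim (f 0) F := fun n => by
      simpa only [wordVal_reverse_digits] using apply_wordVal_eq_elim_foldl_skipLeadingZeros δ s₀ h
        (b.digits n).reverse fun d hd => Nat.digits_lt_base hb (List.mem_reverse.mp hd)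
    obtain ⟨m, hm⟩ : ∃ m, ∀ d ∈ D, d < m + 1 :=
      ⟨D.sup id, fun d hd => Nat.lt_succ_of_le (Finset.le_sup (f := id) hd)⟩
    refine ⟨Fin (m + 1) → Option S, inferInstance, carryStep b (skipLeadingZeros δ s₀),
      window σ 0, fun t => (t 0).elim (f 0) F, fun w hw => ?_⟩
    rw [foldl_carryStep_window hb hσ w fun d hd => hm d (hw d hd), hfσ]
    rfl
  · rintro ⟨S, hS, δ, s₀, F, h⟩
    exact ⟨S, hS, δ, s₀, F, fun w hw => h w fun d hd => hD d (hw d hd)⟩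
end
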